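/- arXiv:1912.09170 — 4 statements merged into one kernel-verified Lean document; each statement's English description precedes it below -/
import Mathlib

section
/- Let two tasks with weights w₁, w₂ > 0 be executed in series (one after the other) within total deadline D > 0, each at constant speed, with α > 1. The minimum total energy over all splits of D into execution times x₁ + x₂ = D, x₁, x₂ > 0, of w₁^α/x₁^{α-1} + w₂^α/x₂^{α-1} equals (w₁ + w₂)^α / D^{α-1}, attained at xᵢ = D·wᵢ/(w₁+w₂). -/
/-!
The energy `w ^ α / x ^ (α - 1) = x * (w / x) ^ α` is the perspective of the convex function
`t ↦ t ^ α`. Jensen's inequality with weights `xᵢ / D` at the points `wᵢ / xᵢ` bounds the total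
energy below by `(∑ wᵢ) ^ α / D ^ (α - 1)`, and all points `wᵢ / xᵢ` coincide exactly when the
split is proportional to the weights, where the bound is attained.
-/

open Real Finset

theorem mul_div_rpow_eq_rpow_div_rpow_sub_one {w x : ℝ} (hw : 0 ≤ w) (hx : 0 < x) (p : ℝ) :
    x * (w / x) ^ p = w ^ p / x ^ (p - 1) := by
  rw [div_rpow hw hx.le, rpow_sub_one hx.ne']
  field_simp

theorem rpow_div_mul_rpow_sub_one {v c p : ℝ} (hv : 0 ≤ v) (hc : 0 < c) (hp : p ≠ 0) :
    v ^ p / (c * v) ^ (p - 1) = v / c ^ (p - 1) := by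
  rcases hv.eq_or_lt with rfl | hv
  · simp [zero_rpow hp]
  rw [mul_rpow hc.le hv.le, rpow_sub_one hv.ne']
  field_simp

/-- Radon's inequality. -/
theorem rpow_sum_div_le_sum_rpow_div {ι : Type*} (s : Finset ι) {w x : ι → ℝ} {p : ℝ}
    (hp : 1 ≤ p) (hw : ∀ i ∈ s, 0 ≤ w i) (hx : ∀ i ∈ s, 0 < x i) :
    (∑ i ∈ s, w i) ^ p / (∑ i ∈ s, x i) ^ (p - 1) ≤ ∑ i ∈ s, w i ^ p / x i ^ (p - 1) := by
  obtain rfl | hs := s.eq_empty_or_nonempty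
  · simp [zero_rpow (by linarith : p ≠ 0)]
  set X := ∑ i ∈ s, x i
  have hX : 0 < X := sum_pos hx hs
  have jensen := (convexOn_rpow hp).map_sum_le (t := s) (w := fun i ↦ x i / X)
    (p := fun i ↦ w i / x i) (fun i hi ↦ (div_pos (hx i hi) hX).le)
    (by rw [← sum_div, div_self hX.ne']) (fun i hi ↦ div_nonneg (hw i hi) (hx i hi).le)
  simp only [smul_eq_mul] at jensen
  have mean : ∑ i ∈ s, x i / X * (w i / x i) = (∑ i ∈ s, w i) / X := by
    rw [sum_div]
    refine sum_congr rfl fun i hi ↦ ?_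
    rw [div_mul_div_comm, mul_comm, mul_div_mul_right _ _ (hx i hi).ne']
  have power_mean : ∑ i ∈ s, x i / X * (w i / x i) ^ p
      = (∑ i ∈ s, w i ^ p / x i ^ (p - 1)) / X := by
    rw [sum_div]
    refine sum_congr rfl fun i hi ↦ ?_
    rw [div_mul_eq_mul_div, mul_div_rpow_eq_rpow_div_rpow_sub_one (hw i hi) (hx i hi)]
  rw [mean, power_mean, div_rpow (sum_nonneg hw) hX.le,
    div_le_div_iff₀ (by positivity) hX] at jensen
  rw [div_le_iff₀ (by positivity), rpow_sub_one hX.ne', mul_div_assoc', le_div_iff₀ hX]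
  exact jensen

theorem sum_rpow_div_mul_rpow_eq {ι : Type*} (s : Finset ι) {w : ι → ℝ} {c p : ℝ}
    (hw : ∀ i ∈ s, 0 ≤ w i) (hc : 0 < c) (hp : p ≠ 0) :
    ∑ i ∈ s, w i ^ p / (c * w i) ^ (p - 1) = (∑ i ∈ s, w i) ^ p / (c * ∑ i ∈ s, w i) ^ (p - 1) := by
  rw [sum_congr rfl fun i hi ↦ rpow_div_mul_rpow_sub_one (hw i hi) hc hp, ← sum_div,
    rpow_div_mul_rpow_sub_one (sum_nonneg hw) hc hp]

/-- Two tasks of weights `w₁, w₂ > 0` executed in series within deadline `D > 0`, each at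
constant speed, with `α > 1`: the minimum of `w₁^α/x₁^(α-1) + w₂^α/x₂^(α-1)` over all
splits `x₁ + x₂ = D`, `x₁, x₂ > 0`, equals `(w₁+w₂)^α / D^(α-1)`, attained at
`xᵢ = D * wᵢ / (w₁+w₂)`. -/
theorem series_two_tasks_min_energy (w₁ w₂ D α : ℝ)
    (hw₁ : 0 < w₁) (hw₂ : 0 < w₂) (hD : 0 < D) (hα : 1 < α) :
    IsLeast {E : ℝ | ∃ x₁ x₂ : ℝ, 0 < x₁ ∧ 0 < x₂ ∧ x₁ + x₂ = D ∧
        E = w₁ ^ α / x₁ ^ (α - 1) + w₂ ^ α / x₂ ^ (α - 1)}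
      ((w₁ + w₂) ^ α / D ^ (α - 1)) ∧
    w₁ ^ α / (D * w₁ / (w₁ + w₂)) ^ (α - 1) + w₂ ^ α / (D * w₂ / (w₁ + w₂)) ^ (α - 1)
      = (w₁ + w₂) ^ α / D ^ (α - 1) := by
  have hW : 0 < w₁ + w₂ := by positivity
  have hw : ∀ i ∈ univ, 0 ≤ ![w₁, w₂] i := fun i _ ↦ by fin_cases i <;> simp [hw₁.le, hw₂.le]
  have optimal : w₁ ^ α / (D * w₁ / (w₁ + w₂)) ^ (α - 1) + w₂ ^ α / (D * w₂ / (w₁ + w₂)) ^ (α - 1)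
      = (w₁ + w₂) ^ α / D ^ (α - 1) := by
    have := sum_rpow_div_mul_rpow_eq univ hw (div_pos hD hW) (by linarith : α ≠ 0)
    simpa [Fin.sum_univ_two, div_mul_eq_mul_div, mul_div_cancel_right₀ _ hW.ne'] using this
  refine ⟨⟨⟨D * w₁ / (w₁ + w₂), D * w₂ / (w₁ + w₂), by positivity, by positivity,
    by field_simp, optimal.symm⟩, ?_⟩, optimal⟩
  rintro E ⟨x₁, x₂, hx₁, hx₂, rfl, rfl⟩
  have hx : ∀ i ∈ univ, 0 < ![x₁, x₂] i := fun i _ ↦ by fin_cases i <;> simp [hx₁, hx₂]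
  simpa [Fin.sum_univ_two] using rpow_sum_div_le_sum_rpow_div univ hα.le hw hx
end

section
/- Define the equivalent weight of an SP-graph recursively: weight(single task of weight w) = w, weight(G₁;G₂) = weight(G₁) + weight(G₂), and weight(G₁||G₂) = (weight(G₁)^α + weight(G₂)^α)^{1/α}, with α > 1. Then the minimum energy to execute an SP-graph G under deadline D > 0 (with unbounded speeds, each task at constant speed, respecting the series/parallel structure) equals weight(G)^α / D^{α-1}. -/
open Real

/-- Series-parallel graphs: a single task of a given weight, a series composition, or a
parallel composition. -/
inductive SPG where
  | task (w : ℝ) : SPG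
  | series (G₁ G₂ : SPG) : SPG
  | par (G₁ G₂ : SPG) : SPG

/-- All task weights are positive. -/
def SPG.posWeights : SPG → Prop
  | .task w => 0 < w
  | .series G₁ G₂ => G₁.posWeights ∧ G₂.posWeights
  | .par G₁ G₂ => G₁.posWeights ∧ G₂.posWeights

/-- Equivalent weight of an SP-graph: `weight(task w) = w`,
`weight(G₁;G₂) = weight G₁ + weight G₂`,
`weight(G₁||G₂) = (weight G₁ ^ α + weight G₂ ^ α)^(1/α)`. -/
noncomputable def SPG.weight (α : ℝ) : SPG → ℝ
  | .task w => w
  | .series G₁ G₂ => G₁.weight α + G₂.weight α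
  | .par G₁ G₂ => ((G₁.weight α) ^ α + (G₂.weight α) ^ α) ^ (1 / α)

/-- Achievable total energies for executing an SP-graph under deadline `D`, each task at
constant (unbounded) speed, respecting the series/parallel structure: in a series
composition the deadline splits additively, in a parallel composition both subgraphs get
the full deadline. -/
def SPG.cost (α : ℝ) : SPG → ℝ → Set ℝ
  | .task w, D => {E | ∃ x : ℝ, 0 < x ∧ x ≤ D ∧ E = w ^ α / x ^ (α - 1)}
  | .series G₁ G₂, D => {E | ∃ D₁ D₂ E₁ E₂ : ℝ, 0 < D₁ ∧ 0 < D₂ ∧ D₁ + D₂ = D ∧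
      E₁ ∈ G₁.cost α D₁ ∧ E₂ ∈ G₂.cost α D₂ ∧ E = E₁ + E₂}
  | .par G₁ G₂, D => {E | ∃ E₁ E₂ : ℝ, E₁ ∈ G₁.cost α D ∧ E₂ ∈ G₂.cost α D ∧ E = E₁ + E₂}

/-! The energy `w ^ α / x ^ (α - 1) = x * (w / x) ^ α` of a task is the perspective of the convex
function `t ↦ t ^ α`, hence jointly convex and positively homogeneous in `(w, x)`, so subadditive:
`E(w₁ + w₂, D₁ + D₂) ≤ E(w₁, D₁) + E(w₂, D₂)`, with equality when `D₁ : D₂ = w₁ : w₂`, so a series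
composition behaves like one task of weight `w₁ + w₂`. In a parallel composition both parts get the
whole deadline and `E(w₁, D) + E(w₂, D) = E((w₁ ^ α + w₂ ^ α) ^ (1 / α), D)`. -/

noncomputable def taskEnergy (α w x : ℝ) : ℝ := w ^ α / x ^ (α - 1)

section taskEnergy

variable {α w x D : ℝ}

lemma taskEnergy_eq_mul_rpow (hw : 0 ≤ w) (hx : 0 < x) :
    taskEnergy α w x = x * (w / x) ^ α := by
  have : 0 < x ^ α := rpow_pos_of_pos hx α
  rw [taskEnergy, div_rpow hw hx.le, rpow_sub hx, rpow_one]
  field_simp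

lemma taskEnergy_le_of_le (hα : 1 ≤ α) (hw : 0 ≤ w) (hx : 0 < x) (hxD : x ≤ D) :
    taskEnergy α w D ≤ taskEnergy α w x :=
  div_le_div_of_nonneg_left (rpow_nonneg hw α) (rpow_pos_of_pos hx _)
    (rpow_le_rpow hx.le hxD (by linarith))

lemma taskEnergy_add_le (hα : 1 ≤ α) {w₁ w₂ D₁ D₂ : ℝ} (hw₁ : 0 ≤ w₁) (hw₂ : 0 ≤ w₂)
    (hD₁ : 0 < D₁) (hD₂ : 0 < D₂) :
    taskEnergy α (w₁ + w₂) (D₁ + D₂) ≤ taskEnergy α w₁ D₁ + taskEnergy α w₂ D₂ := by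
  have hD : 0 < D₁ + D₂ := add_pos hD₁ hD₂
  have hconv := (convexOn_rpow hα).2 (Set.mem_Ici.2 (div_nonneg hw₁ hD₁.le))
    (Set.mem_Ici.2 (div_nonneg hw₂ hD₂.le)) (div_pos hD₁ hD).le (div_pos hD₂ hD).le
    (by field_simp)
  have hmean : D₁ / (D₁ + D₂) * (w₁ / D₁) + D₂ / (D₁ + D₂) * (w₂ / D₂)
      = (w₁ + w₂) / (D₁ + D₂) := by field_simp
  simp only [smul_eq_mul, hmean] at hconv
  rw [taskEnergy_eq_mul_rpow (add_nonneg hw₁ hw₂) hD, taskEnergy_eq_mul_rpow hw₁ hD₁,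
    taskEnergy_eq_mul_rpow hw₂ hD₂]
  calc (D₁ + D₂) * ((w₁ + w₂) / (D₁ + D₂)) ^ α
      ≤ (D₁ + D₂) * (D₁ / (D₁ + D₂) * (w₁ / D₁) ^ α + D₂ / (D₁ + D₂) * (w₂ / D₂) ^ α) :=
        mul_le_mul_of_nonneg_left hconv hD.le
    _ = D₁ * (w₁ / D₁) ^ α + D₂ * (w₂ / D₂) ^ α := by field_simp

lemma taskEnergy_add_eq_of_proportional {w₁ w₂ : ℝ} (hw₁ : 0 < w₁) (hw₂ : 0 < w₂) (hD : 0 < D) :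
    taskEnergy α (w₁ + w₂) D =
      taskEnergy α w₁ (w₁ * D / (w₁ + w₂)) + taskEnergy α w₂ (w₂ * D / (w₁ + w₂)) := by
  have hw : 0 < w₁ + w₂ := add_pos hw₁ hw₂
  rw [taskEnergy_eq_mul_rpow hw.le hD, taskEnergy_eq_mul_rpow hw₁.le (by positivity),
    taskEnergy_eq_mul_rpow hw₂.le (by positivity)]
  have h₁ : w₁ / (w₁ * D / (w₁ + w₂)) = (w₁ + w₂) / D := by field_simp
  have h₂ : w₂ / (w₂ * D / (w₁ + w₂)) = (w₁ + w₂) / D := by field_simp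
  rw [h₁, h₂]
  field_simp

lemma taskEnergy_rpow_add_rpow (hα : α ≠ 0) {w₁ w₂ : ℝ} (hw₁ : 0 ≤ w₁) (hw₂ : 0 ≤ w₂) :
    taskEnergy α ((w₁ ^ α + w₂ ^ α) ^ (1 / α)) D = taskEnergy α w₁ D + taskEnergy α w₂ D := by
  rw [taskEnergy, one_div, rpow_inv_rpow (by positivity) hα, add_div]
  rfl

end taskEnergy

namespace SPG

lemma weight_pos (α : ℝ) : ∀ G : SPG, G.posWeights → 0 < G.weight α
  | .task _, h => h
  | .series G₁ G₂, h => add_pos (weight_pos α G₁ h.1) (weight_pos α G₂ h.2)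
  | .par G₁ G₂, h => rpow_pos_of_pos
      (add_pos (rpow_pos_of_pos (weight_pos α G₁ h.1) α) (rpow_pos_of_pos (weight_pos α G₂ h.2) α)) _

variable {α D : ℝ}

lemma isLeast_cost_task (hα : 1 ≤ α) {w : ℝ} (hw : 0 ≤ w) (hD : 0 < D) :
    IsLeast ((task w).cost α D) (taskEnergy α w D) := by
  refine ⟨⟨D, hD, le_rfl, rfl⟩, ?_⟩
  rintro E ⟨x, hx, hxD, rfl⟩
  exact taskEnergy_le_of_le hα hw hx hxD

lemma isLeast_cost_series (hα : 1 ≤ α) {G₁ G₂ : SPG}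
    (hw₁ : 0 < G₁.weight α) (hw₂ : 0 < G₂.weight α)
    (h₁ : ∀ D, 0 < D → IsLeast (G₁.cost α D) (taskEnergy α (G₁.weight α) D))
    (h₂ : ∀ D, 0 < D → IsLeast (G₂.cost α D) (taskEnergy α (G₂.weight α) D)) (hD : 0 < D) :
    IsLeast ((series G₁ G₂).cost α D) (taskEnergy α ((series G₁ G₂).weight α) D) := by
  set w₁ := G₁.weight α
  set w₂ := G₂.weight α
  constructor
  · have hD₁ : 0 < w₁ * D / (w₁ + w₂) := by positivity
    have hD₂ : 0 < w₂ * D / (w₁ + w₂) := by positivity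
    exact ⟨_, _, _, _, hD₁, hD₂, by field_simp, (h₁ _ hD₁).1, (h₂ _ hD₂).1,
      taskEnergy_add_eq_of_proportional hw₁ hw₂ hD⟩
  · rintro E ⟨D₁, D₂, E₁, E₂, hD₁, hD₂, rfl, hE₁, hE₂, rfl⟩
    calc taskEnergy α (w₁ + w₂) (D₁ + D₂)
        ≤ taskEnergy α w₁ D₁ + taskEnergy α w₂ D₂ :=
          taskEnergy_add_le hα hw₁.le hw₂.le hD₁ hD₂
      _ ≤ E₁ + E₂ := add_le_add ((h₁ D₁ hD₁).2 hE₁) ((h₂ D₂ hD₂).2 hE₂)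

lemma isLeast_cost_par (hα : α ≠ 0) {G₁ G₂ : SPG}
    (hw₁ : 0 ≤ G₁.weight α) (hw₂ : 0 ≤ G₂.weight α)
    (h₁ : IsLeast (G₁.cost α D) (taskEnergy α (G₁.weight α) D))
    (h₂ : IsLeast (G₂.cost α D) (taskEnergy α (G₂.weight α) D)) :
    IsLeast ((par G₁ G₂).cost α D) (taskEnergy α ((par G₁ G₂).weight α) D) := by
  rw [weight, taskEnergy_rpow_add_rpow hα hw₁ hw₂]
  refine ⟨⟨_, _, h₁.1, h₂.1, rfl⟩, ?_⟩
  rintro E ⟨E₁, E₂, hE₁, hE₂, rfl⟩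
  exact add_le_add (h₁.2 hE₁) (h₂.2 hE₂)

end SPG

/-- The minimum energy to execute an SP-graph `G` under deadline `D > 0` equals
`weight(G)^α / D^(α-1)`. -/
theorem spg_min_energy (α : ℝ) (hα : 1 < α) (G : SPG) (hG : G.posWeights)
    (D : ℝ) (hD : 0 < D) :
    IsLeast (G.cost α D) ((G.weight α) ^ α / D ^ (α - 1)) := by
  induction G generalizing D with
  | task w => exact SPG.isLeast_cost_task hα.le (le_of_lt hG) hD
  | series G₁ G₂ ih₁ ih₂ =>
    exact SPG.isLeast_cost_series hα.le (G₁.weight_pos α hG.1) (G₂.weight_pos α hG.2)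
      (ih₁ hG.1) (ih₂ hG.2) hD
  | par G₁ G₂ ih₁ ih₂ =>
    exact SPG.isLeast_cost_par (by linarith) (G₁.weight_pos α hG.1).le (G₂.weight_pos α hG.2).le
      (ih₁ hG.1 D hD) (ih₂ hG.2 D hD)
end

section
/- (Graham's list scheduling bound) For n tasks with processing times x_j > 0 and precedence DAG G on m identical machines, the makespan of any list schedule (which never leaves a machine idle while some available task exists, consistent with a topological order) is at most V + L, where V = (Σ_j x_j)/m is the average volume and L is the length (sum of processing times) of a longest path in G. -/
/-!
Follow the precedences backwards from a task `j`, always moving to the predecessor that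
finishes last. Between the end of that predecessor and the start of its successor, the
successor is available but not started, so the list rule keeps every machine busy. Hence
`[0, σ j)` is covered by the running times of a precedence chain ending just before `j`,
of total length at most `L - x j`, together with times at which all `m` machines are busy,
of total measure at most `V`.
-/

open Finset MeasureTheory

theorem volume_inter_Ico_ne_top (s : Set ℝ) (a b : ℝ) : volume (s ∩ Set.Ico a b) ≠ ⊤ :=
  ((measure_mono Set.inter_subset_right).trans_lt measure_Ico_lt_top).ne

theorem measureReal_inter_Ico_of_subset {s : Set ℝ} {a b : ℝ} (h : Set.Ico a b ⊆ s)
    (hab : a ≤ b) : volume.real (s ∩ Set.Ico a b) = b - a := by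
  rw [Set.inter_eq_right.mpr h, Real.volume_real_Ico_of_le hab]

theorem measureReal_inter_Ico_add_inter_Ico {s : Set ℝ} (hs : MeasurableSet s) {a b c : ℝ}
    (hab : a ≤ b) (hbc : b ≤ c) :
    volume.real (s ∩ Set.Ico a b) + volume.real (s ∩ Set.Ico b c) =
      volume.real (s ∩ Set.Ico a c) := by
  rw [← measureReal_union (Set.Ico_disjoint_Ico_same.mono Set.inter_subset_right
      Set.inter_subset_right) (hs.inter measurableSet_Ico) (volume_inter_Ico_ne_top _ _ _)
      (volume_inter_Ico_ne_top _ _ _), ← Set.inter_union_distrib_left,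
    Set.Ico_union_Ico_eq_Ico hab hbc]

variable {ι κ : Type*}

def allBusy (x σ : ι → ℝ) (μ : ι → κ) : Set ℝ :=
  {t | ∀ c, ∃ i, μ i = c ∧ t ∈ Set.Ico (σ i) (σ i + x i)}

section Busy

variable (x σ : ι → ℝ) (μ : ι → κ)

theorem measurableSet_allBusy [Countable ι] [Countable κ] : MeasurableSet (allBusy x σ μ) := by
  unfold allBusy
  measurability

theorem card_mul_volume_allBusy_le [Fintype ι] [Fintype κ] (hx : ∀ i, 0 ≤ x i) :
    Fintype.card κ * volume (allBusy x σ μ) ≤ ENNReal.ofReal (∑ i, x i) := by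
  classical
  calc (Fintype.card κ : ENNReal) * volume (allBusy x σ μ)
      = ∑ _c : κ, volume (allBusy x σ μ) := by simp
    _ ≤ ∑ c, ∑ i with μ i = c, volume (Set.Ico (σ i) (σ i + x i)) := by
      gcongr with c
      refine (measure_mono fun t ht => ?_).trans (measure_biUnion_finset_le _ _)
      obtain ⟨i, hi, hti⟩ := ht c
      exact Set.mem_biUnion (by simpa using hi) hti
    _ = ∑ i, ENNReal.ofReal (x i) := by
      simp only [Real.volume_Ico, add_sub_cancel_left]
      exact sum_fiberwise _ _ _
    _ = ENNReal.ofReal (∑ i, x i) := (ENNReal.ofReal_sum_of_nonneg fun i _ => hx i).symm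

theorem measureReal_allBusy_inter_le [Fintype ι] [Fintype κ] [Nonempty κ]
    (hx : ∀ i, 0 ≤ x i) (s : Set ℝ) :
    volume.real (allBusy x σ μ ∩ s) ≤ (∑ i, x i) / Fintype.card κ := by
  rw [le_div_iff₀ (by exact_mod_cast Fintype.card_pos), mul_comm]
  calc Fintype.card κ * volume.real (allBusy x σ μ ∩ s)
      = (Fintype.card κ * volume (allBusy x σ μ ∩ s)).toReal := by
        rw [ENNReal.toReal_mul, measureReal_def, ENNReal.toReal_natCast]
    _ ≤ (ENNReal.ofReal (∑ i, x i)).toReal := by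
      refine ENNReal.toReal_mono ENNReal.ofReal_ne_top ?_
      exact (mul_le_mul_right (measure_mono Set.inter_subset_left) _).trans
        (card_mul_volume_allBusy_le x σ μ hx)
    _ = ∑ i, x i := ENNReal.toReal_ofReal (sum_nonneg fun i _ => hx i)

end Busy

section ListSchedule

variable {x σ : ι → ℝ} {μ : ι → κ} {prec : ι → ι → Prop}

theorem Ico_subset_allBusy
    (hlist : ∀ j, ∀ t : ℝ, 0 ≤ t → t < σ j → (∀ k, prec k j → σ k + x k ≤ t) →
      ∀ c : κ, ∃ i, μ i = c ∧ σ i ≤ t ∧ t < σ i + x i)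
    {j : ι} {a : ℝ} (ha : 0 ≤ a) (hpred : ∀ k, prec k j → σ k + x k ≤ a) :
    Set.Ico a (σ j) ⊆ allBusy x σ μ := fun t ht c =>
  hlist j t (ha.trans ht.1) ht.2 (fun k hk => (hpred k hk).trans ht.1) c

theorem exists_chain_le_measureReal_allBusy_add_sum [Finite ι] [Countable κ]
    (hx : ∀ j, 0 < x j) (hstart : ∀ j, 0 ≤ σ j) (hprec : ∀ j k, prec j k → σ j + x j ≤ σ k)
    (hlist : ∀ j, ∀ t : ℝ, 0 ≤ t → t < σ j → (∀ k, prec k j → σ k + x k ≤ t) →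
      ∀ c : κ, ∃ i, μ i = c ∧ σ i ≤ t ∧ t < σ i + x i)
    (j : ι) :
    ∃ l : List ι, (l ++ [j]).IsChain prec ∧
      σ j ≤ volume.real (allBusy x σ μ ∩ Set.Ico 0 (σ j)) + (l.map x).sum := by
  induction j using (Finite.wellFounded_of_trans_of_irrefl fun k j => σ k < σ j).induction with
  | _ j ih =>
  by_cases hj : ∃ k, prec k j
  · obtain ⟨k, hkj, hk_max⟩ := Set.exists_max_image {k | prec k j} (fun k => σ k + x k)
      (Set.toFinite _) hj
    have hk_fin : σ k + x k ≤ σ j := hprec k j hkj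
    obtain ⟨l, hl, hk⟩ := ih k (by linarith [hx k])
    refine ⟨l ++ [k], ?_, ?_⟩
    · rw [List.append_assoc, List.singleton_append]
      exact List.isChain_append_cons_cons.mpr ⟨hl, hkj, List.isChain_singleton j⟩
    have hidle := measureReal_inter_Ico_of_subset
      (Ico_subset_allBusy hlist (by linarith [hstart k, hx k]) hk_max) hk_fin
    have hsplit := measureReal_inter_Ico_add_inter_Ico (measurableSet_allBusy x σ μ)
      (show 0 ≤ σ k + x k by linarith [hstart k, hx k]) hk_fin
    have hmono : volume.real (allBusy x σ μ ∩ Set.Ico 0 (σ k)) ≤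
        volume.real (allBusy x σ μ ∩ Set.Ico 0 (σ k + x k)) :=
      measureReal_mono (Set.inter_subset_inter_right _ (Set.Ico_subset_Ico_right
        (by linarith [hx k]))) (volume_inter_Ico_ne_top _ _ _)
    simp only [List.map_append, List.sum_append, List.map_singleton, List.sum_singleton]
    linarith
  · refine ⟨[], List.isChain_singleton j, ?_⟩
    rw [measureReal_inter_Ico_of_subset (Ico_subset_allBusy hlist le_rfl
      fun k hk => (hj ⟨k, hk⟩).elim) (hstart j)]
    simp

end ListSchedule

theorem graham_list_schedule_bound_general (n m : ℕ) (hm : 0 < m)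
    (x : Fin n → ℝ) (hx : ∀ j, 0 < x j)
    (prec : Fin n → Fin n → Prop)
    (σ : Fin n → ℝ) (μ : Fin n → Fin m)
    (hstart : ∀ j, 0 ≤ σ j)
    (hprec : ∀ j k, prec j k → σ j + x j ≤ σ k)
    (hlist : ∀ j, ∀ t : ℝ, 0 ≤ t → t < σ j → (∀ k, prec k j → σ k + x k ≤ t) →
      ∀ c : Fin m, ∃ i, μ i = c ∧ σ i ≤ t ∧ t < σ i + x i)
    (L : ℝ)
    (hL : IsLUB {S : ℝ | ∃ l : List (Fin n), l.Chain' prec ∧ S = (l.map x).sum} L) :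
    ∀ j, σ j + x j ≤ (∑ j, x j) / m + L := by
  intro j
  obtain ⟨l, hchain, hσj⟩ :=
    exists_chain_le_measureReal_allBusy_add_sum hx hstart hprec hlist j
  have hchain_le : (l.map x).sum + x j ≤ L := hL.1 ⟨l ++ [j], hchain, by simp⟩
  have : Nonempty (Fin m) := ⟨⟨0, hm⟩⟩
  have hbusy := measureReal_allBusy_inter_le x σ μ (fun i => (hx i).le) (Set.Ico 0 (σ j))
  rw [Fintype.card_fin] at hbusy
  linarith

/-- Graham's list-scheduling bound. Consider `n` tasks with processing times `x j > 0`,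
a precedence relation `prec` (a DAG), and a nonpreemptive schedule on `m` identical
machines given by start times `σ` and machine assignment `μ`, respecting precedences and
never running two tasks simultaneously on one machine. If the schedule is a *list
schedule* — whenever a task `j` has all its predecessors completed by time `t < σ j`,
every machine is busy at time `t` — then every task finishes by `V + L`, where
`V = (∑ j, x j) / m` is the average volume and `L` is the length of a longest
precedence path (supremum of path sums). -/
theorem graham_list_schedule_bound (n m : ℕ) (hm : 0 < m)
    (x : Fin n → ℝ) (hx : ∀ j, 0 < x j)
    (prec : Fin n → Fin n → Prop)
    (σ : Fin n → ℝ) (μ : Fin n → Fin m)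
    (hstart : ∀ j, 0 ≤ σ j)
    (hprec : ∀ j k, prec j k → σ j + x j ≤ σ k)
    (hnooverlap : ∀ j k, j ≠ k → μ j = μ k → σ j + x j ≤ σ k ∨ σ k + x k ≤ σ j)
    (hlist : ∀ j, ∀ t : ℝ, 0 ≤ t → t < σ j → (∀ k, prec k j → σ k + x k ≤ t) →
      ∀ c : Fin m, ∃ i, μ i = c ∧ σ i ≤ t ∧ t < σ i + x i)
    (L : ℝ)
    (hL : IsLUB {S : ℝ | ∃ l : List (Fin n), l.Chain' prec ∧ S = (l.map x).sum} L) :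
    ∀ j, σ j + x j ≤ (∑ j, x j) / m + L :=
  graham_list_schedule_bound_general n m hm x hx prec σ μ hstart hprec hlist L hL
end

section
/- (APX-sched guarantee) Suppose an optimal schedule meets deadline D using speeds at most s_max/2 with total energy OPT. Let (x_j*) minimize Σ_j w_j^α/x_j^{α-1} subject to: (Σ_j x_j)/m ≤ D/2, every directed path in G has total length ≤ D/2, and w_j/s_max ≤ x_j. Then (a) the list schedule with processing times x_j* has makespan ≤ D, and (b) Σ_j w_j^α/(x_j*)^{α-1} ≤ 2^{α-1}·OPT. -/
open Real Finset MeasureTheory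

/-!
(a) is Graham's bound for list schedules. Going back from a task `j` along a predecessor that
finishes last, one finds a precedence chain ending in `j` such that at every moment before `j`
starts either all machines are busy or a task of the chain is running. The busy time is at most
`(∑ x) / m ≤ D / 2` and the chain takes at most `D / 2`.

(b) Running the optimal schedule at double speed halves its start and processing times, giving a
schedule with deadline `D / 2`. Its processing times `w j / (2 s⋆ j)` are therefore feasible for
the relaxation, and their energy is `2^(α-1) · OPT`.
-/

section ListSchedule

variable {ι κ : Type*}

def allBusySet (μ : ι → κ) (σ p : ι → ℝ) : Set ℝ :=
  ⋂ c, ⋃ (i) (_ : μ i = c), Set.Ico (σ i) (σ i + p i)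

lemma mem_allBusySet {μ : ι → κ} {σ p : ι → ℝ} {t : ℝ} :
    t ∈ allBusySet μ σ p ↔ ∀ c, ∃ i, μ i = c ∧ t ∈ Set.Ico (σ i) (σ i + p i) := by
  simp only [allBusySet, Set.mem_iInter, Set.mem_iUnion, exists_prop]

lemma volume_biUnion_list_Ico_le (σ p : ι → ℝ) (hp : ∀ i, 0 ≤ p i) (l : List ι) :
    volume (⋃ i ∈ l, Set.Ico (σ i) (σ i + p i)) ≤ ENNReal.ofReal (l.map p).sum := by
  induction l with
  | nil => simp
  | cons a l ih =>
    have hsum : 0 ≤ (l.map p).sum := List.sum_nonneg (by simpa using fun i _ => hp i)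
    rw [List.map_cons, List.sum_cons, ENNReal.ofReal_add (hp a) hsum]
    calc volume (⋃ i ∈ a :: l, Set.Ico (σ i) (σ i + p i))
        ≤ volume (Set.Ico (σ a) (σ a + p a)) +
            volume (⋃ i ∈ l, Set.Ico (σ i) (σ i + p i)) := by
          simpa only [List.mem_cons, Set.iUnion_iUnion_eq_or_left] using measure_union_le _ _
      _ ≤ _ := by gcongr; simp [Real.volume_Ico]

variable [Fintype ι]

lemma card_mul_volume_allBusySet_le [Fintype κ] (μ : ι → κ) (σ p : ι → ℝ)
    (hp : ∀ i, 0 ≤ p i) :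
    Fintype.card κ * volume (allBusySet μ σ p) ≤ ENNReal.ofReal (∑ i, p i) := by
  classical
  calc (Fintype.card κ : ENNReal) * volume (allBusySet μ σ p)
      = ∑ _c : κ, volume (allBusySet μ σ p) := by simp
    _ ≤ ∑ c, ∑ i ∈ univ.filter (μ · = c), ENNReal.ofReal (p i) := by
      gcongr with c
      calc volume (allBusySet μ σ p)
          ≤ volume (⋃ i ∈ univ.filter (μ · = c), Set.Ico (σ i) (σ i + p i)) :=
            measure_mono fun t ht => by
              obtain ⟨i, hi, hti⟩ := mem_allBusySet.1 ht c
              exact Set.mem_biUnion (by simpa using hi) hti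
        _ ≤ ∑ i ∈ univ.filter (μ · = c), volume (Set.Ico (σ i) (σ i + p i)) :=
            measure_biUnion_finset_le _ _
        _ = _ := by simp [Real.volume_Ico]
    _ = ENNReal.ofReal (∑ i, p i) := by
      rw [Finset.sum_fiberwise univ μ fun i => ENNReal.ofReal (p i),
        ENNReal.ofReal_sum_of_nonneg fun i _ => hp i]

variable {prec : ι → ι → Prop} {μ : ι → κ} {σ p : ι → ℝ}

theorem exists_isChain_Ico_subset_allBusySet_union (hp : ∀ i, 0 < p i)
    (hprec : ∀ j k, prec j k → σ j + p j ≤ σ k)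
    (hgreedy : ∀ j t, 0 ≤ t → t < σ j → (∀ k, prec k j → σ k + p k ≤ t) →
      t ∈ allBusySet μ σ p)
    (j : ι) : ∃ l : List ι, (l ++ [j]).IsChain prec ∧
      Set.Ico 0 (σ j) ⊆ allBusySet μ σ p ∪ ⋃ i ∈ l, Set.Ico (σ i) (σ i + p i) := by
  classical
  have hwf : WellFounded fun a b => σ a < σ b :=
    @Finite.wellFounded_of_trans_of_irrefl _ _ _ ⟨fun _ _ _ => lt_trans⟩
      ⟨fun _ => lt_irrefl _⟩
  induction j using hwf.induction with
  | _ j ih =>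
  by_cases hpred : (univ.filter (prec · j)).Nonempty
  · obtain ⟨k, hkj, hk_last⟩ := exists_max_image _ (fun k => σ k + p k) hpred
    rw [mem_filter] at hkj
    obtain ⟨l, hl, hcover⟩ := ih k (by linarith [hprec k j hkj.2, hp k])
    refine ⟨l ++ [k], by simpa using ⟨hl, hkj.2⟩, ?_⟩
    rintro t ⟨ht0, htj⟩
    by_cases hk_done : σ k + p k ≤ t
    · exact Or.inl <| hgreedy j t ht0 htj fun k' hk' =>
        (hk_last k' (by simpa using hk')).trans hk_done
    by_cases hk_started : σ k ≤ t
    · exact Or.inr <| Set.mem_iUnion₂.2 ⟨k, by simp, hk_started, not_le.1 hk_done⟩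
    refine (hcover ⟨ht0, not_le.1 hk_started⟩).imp id fun ht => ?_
    obtain ⟨i, hi, hti⟩ := Set.mem_iUnion₂.1 ht
    exact Set.mem_iUnion₂.2 ⟨i, List.mem_append_left _ hi, hti⟩
  · refine ⟨[], by simp, fun t ⟨ht0, htj⟩ => Or.inl <| hgreedy j t ht0 htj fun k hk => ?_⟩
    exact (hpred ⟨k, by simpa using hk⟩).elim

theorem add_le_sum_div_card_add_of_isChain_le [Fintype κ] [Nonempty κ] (hp : ∀ i, 0 < p i)
    (hprec : ∀ j k, prec j k → σ j + p j ≤ σ k)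
    (hgreedy : ∀ j t, 0 ≤ t → t < σ j → (∀ k, prec k j → σ k + p k ≤ t) →
      t ∈ allBusySet μ σ p)
    {L : ℝ} (hchain : ∀ l : List ι, l.IsChain prec → (l.map p).sum ≤ L) (j : ι) :
    σ j + p j ≤ (∑ i, p i) / Fintype.card κ + L := by
  obtain ⟨l, hl, hcover⟩ := exists_isChain_Ico_subset_allBusySet_union hp hprec hgreedy j
  have hp' : ∀ i, 0 ≤ p i := fun i => (hp i).le
  have hcard : (0 : ℝ) < Fintype.card κ := by exact_mod_cast Fintype.card_pos
  have hbusy : volume (allBusySet μ σ p) ≤ ENNReal.ofReal ((∑ i, p i) / Fintype.card κ) := by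
    rw [ENNReal.ofReal_div_of_pos hcard, ENNReal.le_div_iff_mul_le (by simp) (by simp),
      mul_comm]
    simpa using card_mul_volume_allBusySet_le μ σ p hp'
  have hvol : 0 ≤ (∑ i, p i) / Fintype.card κ :=
    div_nonneg (sum_nonneg fun i _ => hp' i) hcard.le
  have hl_sum : 0 ≤ (l.map p).sum := List.sum_nonneg (by simpa using fun i _ => hp' i)
  have hstart : σ j ≤ (∑ i, p i) / Fintype.card κ + (l.map p).sum := by
    rw [← ENNReal.ofReal_le_ofReal_iff (add_nonneg hvol hl_sum), ENNReal.ofReal_add hvol hl_sum]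
    calc ENNReal.ofReal (σ j) = volume (Set.Ico 0 (σ j)) := by simp [Real.volume_Ico]
      _ ≤ volume (allBusySet μ σ p) + volume (⋃ i ∈ l, Set.Ico (σ i) (σ i + p i)) :=
        (measure_mono hcover).trans (measure_union_le _ _)
      _ ≤ _ := add_le_add hbusy (volume_biUnion_list_Ico_le σ p hp' l)
  have := hchain _ hl
  simp only [List.map_append, List.sum_append, List.map_singleton, List.sum_singleton] at this
  linarith

end ListSchedule

section FeasibleSchedule

variable {ι κ : Type*}

structure IsFeasibleSchedule (prec : ι → ι → Prop) (D : ℝ) (σ : ι → ℝ) (μ : ι → κ)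
    (p : ι → ℝ) : Prop where
  start_nonneg : ∀ j, 0 ≤ σ j
  prec_le : ∀ j k, prec j k → σ j + p j ≤ σ k
  no_overlap : ∀ j k, j ≠ k → μ j = μ k → σ j + p j ≤ σ k ∨ σ k + p k ≤ σ j
  finish_le : ∀ j, σ j + p j ≤ D

namespace IsFeasibleSchedule

variable {prec : ι → ι → Prop} {D : ℝ} {σ : ι → ℝ} {μ : ι → κ} {p : ι → ℝ}

theorem half (h : IsFeasibleSchedule prec D σ μ p) :
    IsFeasibleSchedule prec (D / 2) (fun j => σ j / 2) μ (fun j => p j / 2) where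
  start_nonneg j := by linarith [h.start_nonneg j]
  prec_le j k hjk := by linarith [h.prec_le j k hjk]
  no_overlap j k hjk hμ :=
    (h.no_overlap j k hjk hμ).imp (by intro; linarith) (by intro; linarith)
  finish_le j := by linarith [h.finish_le j]

theorem start_add_sum_le (h : IsFeasibleSchedule prec D σ μ p) :
    ∀ (l : List ι) (a : ι), (a :: l).IsChain prec → σ a + ((a :: l).map p).sum ≤ D
  | [], a, _ => by simpa using h.finish_le a
  | b :: l, a, hl => by
    rw [List.isChain_cons_cons] at hl
    have := h.start_add_sum_le l b hl.2
    simp only [List.map_cons, List.sum_cons] at this ⊢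
    linarith [h.prec_le a b hl.1]

theorem chain_sum_le (h : IsFeasibleSchedule prec D σ μ p) (hD : 0 ≤ D) :
    ∀ l : List ι, l.IsChain prec → (l.map p).sum ≤ D
  | [], _ => by simpa using hD
  | a :: l, hl => by linarith [h.start_add_sum_le l a hl, h.start_nonneg a]

theorem sum_fiber_le [DecidableEq κ] [Fintype ι] (h : IsFeasibleSchedule prec D σ μ p)
    (hp : ∀ j, 0 ≤ p j) (hD : 0 ≤ D) (c : κ) : ∑ j ∈ univ.filter (μ · = c), p j ≤ D := by
  set S := univ.filter (μ · = c)
  have hdisj : (S : Set ι).PairwiseDisjoint fun j => Set.Ico (σ j) (σ j + p j) := by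
    intro a ha b hb hab
    simp only [S, coe_filter, mem_univ, true_and] at ha hb
    rw [Function.onFun, Set.Ico_disjoint_Ico]
    rcases h.no_overlap a b hab (ha.trans hb.symm) with hab' | hba
    · exact (min_le_left _ _).trans (hab'.trans (le_max_right _ _))
    · exact (min_le_right _ _).trans (hba.trans (le_max_left _ _))
  have hsub : (⋃ j ∈ S, Set.Ico (σ j) (σ j + p j)) ⊆ Set.Ico 0 D :=
    Set.iUnion₂_subset fun j _ => Set.Ico_subset_Ico (h.start_nonneg j) (h.finish_le j)
  have := measure_mono (μ := volume) hsub
  rw [measure_biUnion_finset hdisj fun j _ => measurableSet_Ico] at this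
  simp only [Real.volume_Ico, add_sub_cancel_left, sub_zero] at this
  rwa [← ENNReal.ofReal_sum_of_nonneg fun j _ => hp j, ENNReal.ofReal_le_ofReal_iff hD] at this

theorem sum_le [Fintype ι] [Fintype κ] (h : IsFeasibleSchedule prec D σ μ p)
    (hp : ∀ j, 0 ≤ p j) (hD : 0 ≤ D) : ∑ j, p j ≤ Fintype.card κ * D := by
  classical
  calc ∑ j, p j = ∑ c, ∑ j ∈ univ.filter (μ · = c), p j := (sum_fiberwise univ μ p).symm
    _ ≤ ∑ _c : κ, D := sum_le_sum fun c _ => h.sum_fiber_le hp hD c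
    _ = Fintype.card κ * D := by simp

end IsFeasibleSchedule

end FeasibleSchedule

lemma rpow_div_div_rpow_sub_one {w s : ℝ} (hw : 0 < w) (hs : 0 < s) (α : ℝ) :
    w ^ α / (w / s) ^ (α - 1) = w * s ^ (α - 1) := by
  rw [div_rpow hw.le hs.le, rpow_sub_one hw.ne']
  field_simp

theorem apx_sched_guarantee_general (n m : ℕ) (hm : 0 < m)
    (α D smax : ℝ) (hD : 0 < D)
    (w : Fin n → ℝ) (hw : ∀ j, 0 < w j)
    (prec : Fin n → Fin n → Prop)
    -- the optimal schedule, with speeds at most `smax / 2`, meeting deadline `D`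
    (σopt : Fin n → ℝ) (μopt : Fin n → Fin m) (sopt : Fin n → ℝ)
    (hsopt : ∀ j, 0 < sopt j ∧ sopt j ≤ smax / 2)
    (hstartopt : ∀ j, 0 ≤ σopt j)
    (hprecopt : ∀ j k, prec j k → σopt j + w j / sopt j ≤ σopt k)
    (hnooverlapopt : ∀ j k, j ≠ k → μopt j = μopt k →
      σopt j + w j / sopt j ≤ σopt k ∨ σopt k + w k / sopt k ≤ σopt j)
    (hdeadlineopt : ∀ j, σopt j + w j / sopt j ≤ D)
    (OPT : ℝ) (hOPT : OPT = ∑ j, w j * sopt j ^ (α - 1))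
    -- `x` is an optimal solution of the convex relaxation
    (x : Fin n → ℝ)
    (hfeas : (∀ j, 0 < x j) ∧ (∑ j, x j) / m ≤ D / 2 ∧
      (∀ l : List (Fin n), l.Chain' prec → (l.map x).sum ≤ D / 2) ∧
      (∀ j, w j / smax ≤ x j))
    (hmin : ∀ y : Fin n → ℝ,
      (∀ j, 0 < y j) → (∑ j, y j) / m ≤ D / 2 →
      (∀ l : List (Fin n), l.Chain' prec → (l.map y).sum ≤ D / 2) →
      (∀ j, w j / smax ≤ y j) →
      ∑ j, w j ^ α / x j ^ (α - 1) ≤ ∑ j, w j ^ α / y j ^ (α - 1)) :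
    -- (a) any list schedule with processing times `x` meets the deadline `D`
    (∀ (σ : Fin n → ℝ) (μ : Fin n → Fin m),
      (∀ j, 0 ≤ σ j) →
      (∀ j k, prec j k → σ j + x j ≤ σ k) →
      (∀ j k, j ≠ k → μ j = μ k → σ j + x j ≤ σ k ∨ σ k + x k ≤ σ j) →
      (∀ j, ∀ t : ℝ, 0 ≤ t → t < σ j → (∀ k, prec k j → σ k + x k ≤ t) →
        ∀ c : Fin m, ∃ i, μ i = c ∧ σ i ≤ t ∧ t < σ i + x i) →
      ∀ j, σ j + x j ≤ D) ∧
    -- (b) the energy is at most `2^(α-1)` times the optimum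
    ∑ j, w j ^ α / x j ^ (α - 1) ≤ 2 ^ (α - 1) * OPT := by
  obtain ⟨hxpos, hvol, hchain, -⟩ := hfeas
  have hm' : (0 : ℝ) < m := by exact_mod_cast hm
  have : NeZero m := ⟨hm.ne'⟩
  refine ⟨fun σ μ _ hprec _ hgreedy j => ?_, ?_⟩
  · have := add_le_sum_div_card_add_of_isChain_le (κ := Fin m) hxpos hprec
      (fun j t ht0 htj hdone => mem_allBusySet.2 (hgreedy j t ht0 htj hdone)) hchain j
    rw [Fintype.card_fin] at this
    linarith
  · have hfast : IsFeasibleSchedule prec (D / 2) (fun j => σopt j / 2) μopt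
        (fun j => w j / sopt j / 2) :=
      IsFeasibleSchedule.half ⟨hstartopt, hprecopt, hnooverlapopt, hdeadlineopt⟩
    have hpos : ∀ j, 0 < w j / sopt j / 2 := fun j =>
      div_pos (div_pos (hw j) (hsopt j).1) two_pos
    calc ∑ j, w j ^ α / x j ^ (α - 1) ≤ ∑ j, w j ^ α / (w j / sopt j / 2) ^ (α - 1) := by
          refine hmin _ hpos ?_ (hfast.chain_sum_le (by linarith)) fun j => ?_
          · rw [div_le_iff₀ hm', mul_comm]
            simpa using hfast.sum_le (fun j => (hpos j).le) (by linarith)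
          · rw [div_div]
            exact div_le_div_of_nonneg_left (hw j).le (by linarith [(hsopt j).1])
              (by linarith [(hsopt j).2])
      _ = 2 ^ (α - 1) * OPT := by
          rw [hOPT, mul_sum]
          refine sum_congr rfl fun j _ => ?_
          rw [div_div, rpow_div_div_rpow_sub_one (hw j) (by linarith [(hsopt j).1]),
            mul_rpow (hsopt j).1.le zero_le_two]
          ring

/-- APX-sched guarantee. Tasks with weights `w j > 0`, precedence DAG `prec`, `m`
identical machines, power `s^α` with `α ≥ 1`, deadline `D` and speed bound `smax`.
Suppose an optimal schedule (start times `σ⋆`, machines `μ⋆`, speeds `s⋆ j ≤ smax/2`)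
meets deadline `D` with total energy `OPT`. Let `x` minimize `∑ j, w j ^ α / x j ^ (α-1)`
subject to `(∑ j, x j)/m ≤ D/2`, every precedence path having total length `≤ D/2`, and
`w j / smax ≤ x j`. Then (a) any list schedule with processing times `x` has makespan
`≤ D`, and (b) `∑ j, w j ^ α / x j ^ (α-1) ≤ 2^(α-1) * OPT`. -/
theorem apx_sched_guarantee (n m : ℕ) (hm : 0 < m)
    (α D smax : ℝ) (hα : 1 ≤ α) (hD : 0 < D) (hsmax : 0 < smax)
    (w : Fin n → ℝ) (hw : ∀ j, 0 < w j)
    (prec : Fin n → Fin n → Prop)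
    -- the optimal schedule, with speeds at most `smax / 2`, meeting deadline `D`
    (σopt : Fin n → ℝ) (μopt : Fin n → Fin m) (sopt : Fin n → ℝ)
    (hsopt : ∀ j, 0 < sopt j ∧ sopt j ≤ smax / 2)
    (hstartopt : ∀ j, 0 ≤ σopt j)
    (hprecopt : ∀ j k, prec j k → σopt j + w j / sopt j ≤ σopt k)
    (hnooverlapopt : ∀ j k, j ≠ k → μopt j = μopt k →
      σopt j + w j / sopt j ≤ σopt k ∨ σopt k + w k / sopt k ≤ σopt j)
    (hdeadlineopt : ∀ j, σopt j + w j / sopt j ≤ D)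
    (OPT : ℝ) (hOPT : OPT = ∑ j, w j * sopt j ^ (α - 1))
    -- `x` is an optimal solution of the convex relaxation
    (x : Fin n → ℝ)
    (hfeas : (∀ j, 0 < x j) ∧ (∑ j, x j) / m ≤ D / 2 ∧
      (∀ l : List (Fin n), l.Chain' prec → (l.map x).sum ≤ D / 2) ∧
      (∀ j, w j / smax ≤ x j))
    (hmin : ∀ y : Fin n → ℝ,
      (∀ j, 0 < y j) → (∑ j, y j) / m ≤ D / 2 →
      (∀ l : List (Fin n), l.Chain' prec → (l.map y).sum ≤ D / 2) →
      (∀ j, w j / smax ≤ y j) →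
      ∑ j, w j ^ α / x j ^ (α - 1) ≤ ∑ j, w j ^ α / y j ^ (α - 1)) :
    -- (a) any list schedule with processing times `x` meets the deadline `D`
    (∀ (σ : Fin n → ℝ) (μ : Fin n → Fin m),
      (∀ j, 0 ≤ σ j) →
      (∀ j k, prec j k → σ j + x j ≤ σ k) →
      (∀ j k, j ≠ k → μ j = μ k → σ j + x j ≤ σ k ∨ σ k + x k ≤ σ j) →
      (∀ j, ∀ t : ℝ, 0 ≤ t → t < σ j → (∀ k, prec k j → σ k + x k ≤ t) →
        ∀ c : Fin m, ∃ i, μ i = c ∧ σ i ≤ t ∧ t < σ i + x i) →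
      ∀ j, σ j + x j ≤ D) ∧
    -- (b) the energy is at most `2^(α-1)` times the optimum
    ∑ j, w j ^ α / x j ^ (α - 1) ≤ 2 ^ (α - 1) * OPT :=
  apx_sched_guarantee_general n m hm α D smax hD w hw prec σopt μopt sopt hsopt hstartopt hprecopt
    hnooverlapopt hdeadlineopt OPT hOPT x hfeas hmin
end
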